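/- arXiv:1210.2552 — 4 statements merged into one kernel-verified Lean document; each statement's English description precedes it below -/
import Mathlib

section
/- Let S be a set equipped with a strict partial order <, and say two elements commute if they are comparable. In the free monoid on S modulo commutation of comparable adjacent elements, call a word s₁⋯sₙ in normal form if for all i < n it is not the case that sᵢ > sᵢ₊₁. Then every word is equivalent (via finitely many swaps of adjacent comparable letters) to a unique word in normal form. -/
namespace SPO

variable {S : Type*}

/-- Swap two adjacent comparable letters. -/
def Swap (lt : S → S → Prop) (u v : List S) : Prop :=
  ∃ (x y : List S) (s t : S),
    (lt s t ∨ lt t s) ∧ u = x ++ s :: t :: y ∧ v = x ++ t :: s :: y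

/-- Two words are equivalent if related by finitely many swaps of adjacent
comparable letters. -/
def Equiv (lt : S → S → Prop) : List S → List S → Prop :=
  Relation.ReflTransGen (Swap lt)

/-- A word is in normal form if no adjacent pair satisfies `sᵢ > sᵢ₊₁`. -/
def NormalForm (lt : S → S → Prop) (w : List S) : Prop :=
  List.Chain' (fun a b => ¬ lt b a) w

end SPO

/-!
Orient each commutation so that it removes an inversion: `s t ↦ t s` whenever `t < s`. Every such
step lowers the number of inversions, so rewriting terminates, and the irreducible words are exactly
the words in normal form. The only critical overlap, `s t c` with `c < t < s`, is resolved to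
`c t s` by transitivity, so the system is locally confluent and hence confluent by Newman's lemma.
As equivalence is the equivalence closure of this rewriting, each class contains exactly one
irreducible word.
-/

namespace Relation

variable {α : Type*} {r : α → α → Prop}

theorem exists_reflTransGen_forall_not (hwf : WellFounded (flip r)) (a : α) :
    ∃ b, ReflTransGen r a b ∧ ∀ c, ¬ r b c := by
  obtain ⟨b, hab, hmin⟩ := hwf.has_min {b | ReflTransGen r a b} ⟨a, .refl⟩
  exact ⟨b, hab, fun c hbc => hmin c (hab.tail hbc) hbc⟩

theorem eq_of_reflTransGen_of_forall_not {a b : α} (h : ReflTransGen r a b)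
    (ha : ∀ c, ¬ r a c) : a = b := by
  rcases h.cases_head with rfl | ⟨c, hac, -⟩
  · rfl
  · exact absurd hac (ha c)

/-- Newman's lemma. -/
theorem join_reflTransGen_of_wellFounded (hwf : WellFounded (flip r))
    (hlc : ∀ a b c, r a b → r a c → Join (ReflTransGen r) b c) {a b c : α}
    (hab : ReflTransGen r a b) (hac : ReflTransGen r a c) : Join (ReflTransGen r) b c := by
  induction a using hwf.induction generalizing b c with
  | _ a ih =>
    rcases hab.cases_head with rfl | ⟨b₁, hab₁, hb₁b⟩
    · exact ⟨c, hac, .refl⟩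
    rcases hac.cases_head with rfl | ⟨c₁, hac₁, hc₁c⟩
    · exact ⟨b, .refl, .head hab₁ hb₁b⟩
    obtain ⟨d, hb₁d, hc₁d⟩ := hlc a b₁ c₁ hab₁ hac₁
    obtain ⟨e, hbe, hde⟩ := ih b₁ hab₁ hb₁b hb₁d
    obtain ⟨z, hcz, hez⟩ := ih c₁ hac₁ hc₁c (hc₁d.trans hde)
    exact ⟨z, hbe.trans hez, hcz⟩

theorem eq_of_eqvGen_of_confluent
    (hconf : ∀ a b c, ReflTransGen r a b → ReflTransGen r a c → Join (ReflTransGen r) b c)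
    {a b : α} (hab : EqvGen r a b) (ha : ∀ c, ¬ r a c) (hb : ∀ c, ¬ r b c) : a = b := by
  have hjoin : EqvGen r ≤ Join (ReflTransGen r) := fun x y hxy =>
    (equivalence_join hconf).eqvGen_iff.mp
      (EqvGen.mono (fun _ y h => ⟨y, .single h, .refl⟩) x y hxy)
  obtain ⟨c, hac, hbc⟩ := hjoin a b hab
  rw [eq_of_reflTransGen_of_forall_not hac ha, eq_of_reflTransGen_of_forall_not hbc hb]

end Relation

namespace SPO

open Relation

variable {S : Type*} {lt : S → S → Prop}

inductive Red (lt : S → S → Prop) : List S → List S → Prop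
  | head {s t : S} {y : List S} : lt t s → Red lt (s :: t :: y) (t :: s :: y)
  | cons (a : S) {u v : List S} : Red lt u v → Red lt (a :: u) (a :: v)

theorem red_iff {u v : List S} :
    Red lt u v ↔ ∃ (x y : List S) (s t : S), lt t s ∧ u = x ++ s :: t :: y ∧
      v = x ++ t :: s :: y := by
  constructor
  · intro h
    induction h with
    | @head s t y h => exact ⟨[], y, s, t, h, rfl, rfl⟩
    | cons a _ ih =>
      obtain ⟨x, y, s, t, h, rfl, rfl⟩ := ih
      exact ⟨a :: x, y, s, t, h, rfl, rfl⟩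
  · rintro ⟨x, y, s, t, h, rfl, rfl⟩
    induction x with
    | nil => exact .head h
    | cons a x ih => exact .cons a ih

theorem swap_eq_symmGen_red : Swap lt = SymmGen (Red lt) := by
  ext u v
  simp only [Swap, SymmGen, red_iff]
  constructor
  · rintro ⟨x, y, s, t, h | h, rfl, rfl⟩
    · exact .inr ⟨x, y, t, s, h, rfl, rfl⟩
    · exact .inl ⟨x, y, s, t, h, rfl, rfl⟩
  · rintro (⟨x, y, s, t, h, rfl, rfl⟩ | ⟨x, y, s, t, h, rfl, rfl⟩)
    · exact ⟨x, y, s, t, .inr h, rfl, rfl⟩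
    · exact ⟨x, y, t, s, .inl h, rfl, rfl⟩

theorem equiv_eq_eqvGen_red : Equiv lt = EqvGen (Red lt) := by
  rw [Equiv, swap_eq_symmGen_red, EqvGen.reflTransGen_symmGen]

theorem normalForm_iff_forall_not_red {w : List S} :
    NormalForm lt w ↔ ∀ v, ¬ Red lt w v := by
  induction w with
  | nil => exact ⟨fun _ _ h => (nomatch h), fun _ => List.isChain_nil⟩
  | cons a l ih =>
    cases l with
    | nil => exact ⟨fun _ _ h => by rcases h with _ | ⟨_, ⟨⟩⟩, fun _ => List.isChain_singleton a⟩
    | cons b m =>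
      rw [show NormalForm lt (a :: b :: m) ↔ ¬ lt b a ∧ NormalForm lt (b :: m) from
        List.isChain_cons_cons, ih]
      constructor
      · rintro ⟨hba, hm⟩ v (_ | ⟨_, h⟩)
        · exact hba ‹_›
        · exact hm _ h
      · intro h
        exact ⟨fun hba => h _ (.head hba), fun v hv => h _ (.cons a hv)⟩

theorem Red.perm {u v : List S} (h : Red lt u v) : u.Perm v := by
  induction h with
  | head _ => exact .swap _ _ _
  | cons a _ ih => exact ih.cons a

open scoped Classical in
noncomputable def inversions (lt : S → S → Prop) : List S → ℕ
  | [] => 0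
  | a :: l => l.countP (fun b => lt b a) + inversions lt l

theorem Red.inversions_lt [Std.Asymm lt] {u v : List S} (h : Red lt u v) :
    inversions lt v < inversions lt u := by
  classical
  induction h with
  | @head s t y h =>
    simp only [inversions, List.countP_cons, h, asymm h, decide_true, decide_false,
      Bool.false_eq_true, ↓reduceIte]
    omega
  | cons a h ih =>
    simp only [inversions, h.perm.countP_eq]
    omega

theorem wellFounded_flip_red [Std.Asymm lt] : WellFounded (flip (Red lt)) :=
  Subrelation.wf (fun h => h.inversions_lt) (InvImage.wf (inversions lt) wellFounded_lt)

theorem red_head_join [IsTrans S lt] {s t : S} {y w : List S} (hts : lt t s)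
    (h : Red lt (s :: t :: y) w) : Join (ReflTransGen (Red lt)) (t :: s :: y) w := by
  rcases h with _ | ⟨_, @⟨_, c, y', hct⟩ | ⟨_, hy⟩⟩
  · exact ⟨_, .refl, .refl⟩
  · have hcs : lt c s := _root_.trans hct hts
    exact ⟨c :: t :: s :: y', .tail (.single (.cons t (.head hcs))) (.head hct),
      .tail (.single (.head hcs)) (.cons c (.head hts))⟩
  · exact ⟨_, .single (.cons t (.cons s hy)), .single (.head hts)⟩

theorem red_locallyConfluent [IsTrans S lt] {u v w : List S} (huv : Red lt u v)
    (huw : Red lt u w) : Join (ReflTransGen (Red lt)) v w := by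
  induction huv generalizing w with
  | head hts => exact red_head_join hts huw
  | cons a huv ih =>
    rcases huw with hts | ⟨_, huw⟩
    · exact _root_.symm (red_head_join hts (.cons a huv))
    · obtain ⟨z, hvz, hwz⟩ := ih huw
      exact ⟨a :: z, hvz.lift _ (fun _ _ => .cons a), hwz.lift _ (fun _ _ => .cons a)⟩

theorem red_confluent [IsTrans S lt] [Std.Asymm lt] {u v w : List S}
    (huv : ReflTransGen (Red lt) u v) (huw : ReflTransGen (Red lt) u w) :
    Join (ReflTransGen (Red lt)) v w :=
  join_reflTransGen_of_wellFounded wellFounded_flip_red (fun _ _ _ => red_locallyConfluent)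
    huv huw

end SPO

open SPO in
/-- Every word is equivalent to a unique word in normal form. -/
theorem exists_unique_normal_form {S : Type*} (lt : S → S → Prop)
    [IsStrictOrder S lt] (u : List S) :
    ∃ v : List S, (Equiv lt u v ∧ NormalForm lt v) ∧
      ∀ v' : List S, Equiv lt u v' → NormalForm lt v' → v' = v := by
  obtain ⟨v, huv, hv⟩ :=
    Relation.exists_reflTransGen_forall_not (wellFounded_flip_red (lt := lt)) u
  have huv' : Relation.EqvGen (Red lt) u v := Relation.EqvGen.reflTransGen_le_eqvGen _ _ _ huv
  rw [equiv_eq_eqvGen_red]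
  refine ⟨v, ⟨huv', normalForm_iff_forall_not_red.2 hv⟩, fun w huw hw => ?_⟩
  exact Relation.eq_of_eqvGen_of_confluent (fun _ _ _ => red_confluent)
    (.trans _ _ _ (.symm _ _ huw) huv') (normalForm_iff_forall_not_red.1 hw) hv
end

section
/- In the free monoid on a strictly partially ordered set S modulo commutation of comparable adjacent elements, left cancellation holds: if r·t₂⋯tₙ is equivalent to r·s₂⋯sₙ, then t₂⋯tₙ is equivalent to s₂⋯sₙ. -/
/-!
Deleting the first occurrence of a letter `r` is compatible with the swaps: a swap away from
the first `r` survives the deletion, and a swap moving the first `r` past a neighbour becomes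
trivial once that `r` is deleted. Hence `List.erase r` maps equivalent words to equivalent words,
and `(r :: w).erase r = w`.
-/

namespace SPO

variable {S : Type*} [DecidableEq S] {lt : S → S → Prop}

theorem Swap.erase {u v : List S} (h : Swap lt u v) (r : S) :
    Equiv lt (u.erase r) (v.erase r) := by
  obtain ⟨x, y, s, t, hst, rfl, rfl⟩ := h
  simp only [List.erase_append]
  split_ifs
  · exact .single ⟨x.erase r, y, s, t, hst, rfl, rfl⟩
  · by_cases hsr : s = r
    · subst hsr
      by_cases hts : t = s <;> simpa [hts] using .refl
    · by_cases htr : t = r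
      · subst htr
        simpa [hsr] using .refl
      · simpa [hsr, htr] using .single ⟨x, y.erase r, s, t, hst, rfl, rfl⟩

theorem Equiv.erase {u v : List S} (h : Equiv lt u v) (r : S) :
    Equiv lt (u.erase r) (v.erase r) :=
  Relation.ReflTransGen.lift' (fun w : List S => w.erase r)
    (fun _ _ (hs : Swap lt _ _) => hs.erase r) _ _ h

end SPO

open SPO in
theorem equiv_left_cancel_general {S : Type*} (lt : S → S → Prop)
    (r : S) (t s : List S)
    (h : Equiv lt (r :: t) (r :: s)) :
    Equiv lt t s := by
  classical
  simpa using h.erase r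

open SPO in
/-- Left cancellation modulo commutation of comparable adjacent letters. -/
theorem equiv_left_cancel {S : Type*} (lt : S → S → Prop)
    [IsStrictOrder S lt] (r : S) (t s : List S)
    (h : Equiv lt (r :: t) (r :: s)) :
    Equiv lt t s :=
  equiv_left_cancel_general lt r t s h
end

section
/- Every element of the monoid Γ generated by all nonempty intervals in [0,N], subject to the relations ts = st = s when t ⊆ s and ts = st when s and t commute, is represented by a reduced word, unique up to equivalence by commutation. -/
structure Letter (N : ℕ) where
  lo : ℕ
  hi : ℕ
  lo_le_hi : lo ≤ hi
  hi_le : hi ≤ N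

namespace PS

/-- `t` is a (non-strict) subletter of `s`. -/
def Sub {N : ℕ} (t s : Letter N) : Prop := s.lo ≤ t.lo ∧ t.hi ≤ s.hi

/-- `t` is a proper subletter of `s`. -/
def PSub {N : ℕ} (t s : Letter N) : Prop := Sub t s ∧ t ≠ s

/-- Two letters commute iff they have distance at least 2. -/
def Comm {N : ℕ} (s t : Letter N) : Prop := s.hi + 2 ≤ t.lo ∨ t.hi + 2 ≤ s.lo

abbrev Word (N : ℕ) := List (Letter N)

/-- Commutation step: swap two adjacent commuting letters. -/
def SwapStep {N : ℕ} (u v : Word N) : Prop :=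
  ∃ (x y : Word N) (s t : Letter N),
    Comm s t ∧ u = x ++ s :: t :: y ∧ v = x ++ t :: s :: y

/-- Cancellation step: replace an occurrence `s·t` or `t·s` by `s`, when `t ⊆ s`. -/
def CancelStep {N : ℕ} (u v : Word N) : Prop :=
  ∃ (x y : Word N) (s t : Letter N),
    Sub t s ∧ (u = x ++ s :: t :: y ∨ u = x ++ t :: s :: y) ∧ v = x ++ s :: y

/-- Splitting step: replace an occurrence `s·s` by a (possibly empty) product of
proper subletters of `s`. -/
def SplitStep {N : ℕ} (u v : Word N) : Prop :=
  ∃ (x y : Word N) (s : Letter N) (l : Word N),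
    (∀ t ∈ l, PSub t s) ∧ u = x ++ s :: s :: y ∧ v = x ++ l ++ y

/-- Commutation-equivalence of words. -/
def WEquiv {N : ℕ} : Word N → Word N → Prop := Relation.ReflTransGen SwapStep

/-- Reduction: finitely many commutation and cancellation steps. -/
def Red {N : ℕ} : Word N → Word N → Prop :=
  Relation.ReflTransGen (fun u v => SwapStep u v ∨ CancelStep u v)

/-- Strong reduction: also allowing splitting steps. -/
def SRed {N : ℕ} : Word N → Word N → Prop :=
  Relation.ReflTransGen (fun u v => SwapStep u v ∨ CancelStep u v ∨ SplitStep u v)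

/-- The congruence defining the monoid Γ. -/
def GammaRel {N : ℕ} : Word N → Word N → Prop :=
  Relation.EqvGen (fun u v => SwapStep u v ∨ CancelStep u v)

/-- A word is reduced if there is no pair of occurrences `i ≠ j` with `sᵢ ⊆ sⱼ`
such that `sᵢ` commutes with every letter strictly between them. -/
def Reduced {N : ℕ} (w : Word N) : Prop :=
  ¬ ∃ (x y z : Word N) (a b : Letter N),
      w = x ++ a :: (y ++ b :: z) ∧
      ((Sub a b ∧ ∀ r ∈ y, Comm a r) ∨ (Sub b a ∧ ∀ r ∈ y, Comm b r))

/-- The letter `s` is left-absorbed by the word `v`. -/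
def LAbsLetter {N : ℕ} (s : Letter N) (v : Word N) : Prop :=
  ∃ (x : Word N) (t : Letter N) (y : Word N),
    v = x ++ t :: y ∧ Sub s t ∧ ∀ r ∈ x, Comm s r

/-- The letter `s` is properly left-absorbed by the word `v`. -/
def PLAbsLetter {N : ℕ} (s : Letter N) (v : Word N) : Prop :=
  ∃ (x : Word N) (t : Letter N) (y : Word N),
    v = x ++ t :: y ∧ PSub s t ∧ ∀ r ∈ x, Comm s r

/-- The letter `s` is right-absorbed by the word `w`. -/
def RAbsLetter {N : ℕ} (s : Letter N) (w : Word N) : Prop :=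
  ∃ (x : Word N) (t : Letter N) (y : Word N),
    w = x ++ t :: y ∧ Sub s t ∧ ∀ r ∈ y, Comm s r

/-- The letter `s` is properly right-absorbed by the word `w`. -/
def PRAbsLetter {N : ℕ} (s : Letter N) (w : Word N) : Prop :=
  ∃ (x : Word N) (t : Letter N) (y : Word N),
    w = x ++ t :: y ∧ PSub s t ∧ ∀ r ∈ y, Comm s r

/-- The word `u` is left-absorbed by `v`. -/
def LAbsWord {N : ℕ} (u v : Word N) : Prop := ∀ s ∈ u, LAbsLetter s v

/-- `v` bites `u` from the right: `v` left-absorbs some letter of the final segment of `u`. -/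
def BitesRight {N : ℕ} (v u : Word N) : Prop :=
  ∃ (x : Word N) (s : Letter N) (y : Word N),
    u = x ++ s :: y ∧ (∀ r ∈ y, Comm s r) ∧ LAbsLetter s v

end PS

/-!
The normal form of a word is obtained by inserting its letters one at a time, from the right,
into the empty word, where inserting `s` into a reduced word `v` produces a reduced word equal
to `s · v` in Γ. So the normal form of `u` is Γ-equivalent to `u` and reduced, and a reduced word
is its own normal form up to commutation. Uniqueness then comes down to the invariance of the
normal form under the defining relations, that is, to `ins s ∘ ins t = ins s = ins t ∘ ins s` for
`t ⊆ s`, to `ins s ∘ ins t ≈ ins t ∘ ins s` for commuting `s` and `t`, and to the compatibility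
of `ins` with commutation.
-/

namespace PS

variable {N : ℕ}

section Letters

variable {a b c d : Letter N}

theorem Sub.refl (a : Letter N) : Sub a a := ⟨le_rfl, le_rfl⟩

theorem Sub.trans (h₁ : Sub a b) (h₂ : Sub b c) : Sub a c :=
  ⟨h₂.1.trans h₁.1, h₁.2.trans h₂.2⟩

theorem Sub.antisymm (h₁ : Sub a b) (h₂ : Sub b a) : a = b := by
  obtain ⟨lo, hi, _, _⟩ := a
  obtain ⟨lo', hi', _, _⟩ := b
  simp only [Sub] at h₁ h₂
  congr <;> omega

theorem Comm.symm (h : Comm a b) : Comm b a := Or.symm h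

theorem Comm.of_sub (h : Comm a b) (hc : Sub c a) (hd : Sub d b) : Comm c d := by
  unfold Comm Sub at *; omega

theorem Comm.of_sub_left (h : Comm a b) (hc : Sub c a) : Comm c b := h.of_sub hc (.refl b)

theorem Comm.of_sub_right (h : Comm a b) (hd : Sub d b) : Comm a d := h.of_sub (.refl a) hd

theorem Sub.not_comm (h : Sub a b) : ¬ Comm a b := by
  have := a.lo_le_hi; unfold Comm Sub at *; omega

theorem Sub.not_comm' (h : Sub a b) : ¬ Comm b a := fun hc => h.not_comm hc.symm

def Overlap (s b : Letter N) : Prop := ¬ Sub s b ∧ ¬ Sub b s ∧ ¬ Comm s b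

end Letters

def CommAll (a : Letter N) (l : Word N) : Prop := ∀ r ∈ l, Comm a r

@[simp] theorem commAll_nil (a : Letter N) : CommAll a [] := by simp [CommAll]

@[simp] theorem commAll_cons {a b : Letter N} {l : Word N} :
    CommAll a (b :: l) ↔ Comm a b ∧ CommAll a l := by
  simp [CommAll]

@[simp] theorem commAll_append {a : Letter N} {l₁ l₂ : Word N} :
    CommAll a (l₁ ++ l₂) ↔ CommAll a l₁ ∧ CommAll a l₂ := by
  simp [CommAll, or_imp, forall_and]

theorem CommAll.of_sub {a c : Letter N} {l : Word N} (h : CommAll a l) (hc : Sub c a) :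
    CommAll c l := fun r hr => (h r hr).of_sub_left hc

section WEquiv

theorem SwapStep.symm {u v : Word N} (h : SwapStep u v) : SwapStep v u := by
  obtain ⟨x, y, s, t, hc, rfl, rfl⟩ := h
  exact ⟨x, y, t, s, hc.symm, rfl, rfl⟩

theorem SwapStep.append_left (x : Word N) {u v : Word N} (h : SwapStep u v) :
    SwapStep (x ++ u) (x ++ v) := by
  obtain ⟨p, q, s, t, hc, rfl, rfl⟩ := h
  exact ⟨x ++ p, q, s, t, hc, by simp, by simp⟩

theorem WEquiv.refl (u : Word N) : WEquiv u u := Relation.ReflTransGen.refl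

theorem WEquiv.trans {u v w : Word N} (h₁ : WEquiv u v) (h₂ : WEquiv v w) : WEquiv u w :=
  Relation.ReflTransGen.trans h₁ h₂

theorem WEquiv.symm {u v : Word N} (h : WEquiv u v) : WEquiv v u := by
  induction h with
  | refl => exact .refl _
  | tail _ h ih => exact Relation.ReflTransGen.head h.symm ih

theorem WEquiv.append_left (x : Word N) {u v : Word N} (h : WEquiv u v) :
    WEquiv (x ++ u) (x ++ v) :=
  Relation.ReflTransGen.lift (x ++ ·) (fun _ _ => SwapStep.append_left x) _ _ h

theorem WEquiv.cons (a : Letter N) {u v : Word N} (h : WEquiv u v) :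
    WEquiv (a :: u) (a :: v) := h.append_left [a]

theorem WEquiv.swap {s t : Letter N} (hc : Comm s t) (x y : Word N) :
    WEquiv (x ++ s :: t :: y) (x ++ t :: s :: y) := .single ⟨x, y, s, t, hc, rfl, rfl⟩

theorem WEquiv.swap_head {s t : Letter N} (hc : Comm s t) (y : Word N) :
    WEquiv (s :: t :: y) (t :: s :: y) := .swap hc [] y

theorem WEquiv.move_past {s : Letter N} {x : Word N} (h : CommAll s x) (z : Word N) :
    WEquiv (s :: (x ++ z)) (x ++ s :: z) := by
  induction x with
  | nil => exact WEquiv.refl _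
  | cons c x ih =>
    rw [commAll_cons] at h
    exact (WEquiv.swap_head h.1 _).trans ((ih h.2).cons c)

end WEquiv

section GammaRel

theorem GammaRel.refl (u : Word N) : GammaRel u u := Relation.EqvGen.refl u

theorem GammaRel.trans {u v w : Word N} (h₁ : GammaRel u v) (h₂ : GammaRel v w) :
    GammaRel u w := Relation.EqvGen.trans _ _ _ h₁ h₂

theorem GammaRel.of_wequiv {u v : Word N} (h : WEquiv u v) : GammaRel u v := by
  induction h with
  | refl => exact GammaRel.refl _
  | tail _ h ih => exact ih.trans (Relation.EqvGen.rel _ _ (Or.inl h))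

theorem GammaRel.of_cancelStep {u v : Word N} (h : CancelStep u v) : GammaRel u v :=
  Relation.EqvGen.rel _ _ (Or.inr h)

theorem CancelStep.append_left (x : Word N) {u v : Word N} (h : CancelStep u v) :
    CancelStep (x ++ u) (x ++ v) := by
  obtain ⟨p, q, s, t, hs, hu | hu, rfl⟩ := h <;> subst hu
  · exact ⟨x ++ p, q, s, t, hs, Or.inl (by simp), by simp⟩
  · exact ⟨x ++ p, q, s, t, hs, Or.inr (by simp), by simp⟩

theorem GammaRel.cons (a : Letter N) {u v : Word N} (h : GammaRel u v) :
    GammaRel (a :: u) (a :: v) := by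
  induction h with
  | rel _ _ h =>
    exact .rel _ _ (h.imp (SwapStep.append_left [a]) (CancelStep.append_left [a]))
  | refl => exact GammaRel.refl _
  | symm _ _ _ ih => exact Relation.EqvGen.symm _ _ ih
  | trans _ _ _ _ _ ih₁ ih₂ => exact ih₁.trans ih₂

end GammaRel

section Absorption

/-- `u`, placed in front of `w`, can be commuted up to an occurrence of `t`. -/
def Reachable (u t : Letter N) (w : Word N) : Prop := ∃ x y, w = x ++ t :: y ∧ CommAll u x

/-- Dual to `LAbsLetter`: `u`, placed in front of `w`, absorbs some letter of `w`. -/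
def LAbsorbs (u : Letter N) (w : Word N) : Prop := ∃ c, Sub c u ∧ Reachable c c w

variable {u t b : Letter N} {w : Word N}

theorem not_reachable_nil : ¬ Reachable u t [] := by
  rintro ⟨x, y, h, -⟩
  simp at h

theorem reachable_cons_iff :
    Reachable u t (b :: w) ↔ t = b ∨ (Comm u b ∧ Reachable u t w) := by
  constructor
  · rintro ⟨_ | ⟨d, x⟩, y, h, hx⟩
    · exact Or.inl (List.cons.inj h).1.symm
    · obtain ⟨rfl, rfl⟩ := List.cons.inj h
      rw [commAll_cons] at hx
      exact Or.inr ⟨hx.1, x, y, rfl, hx.2⟩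
  · rintro (rfl | ⟨hb, x, y, rfl, hx⟩)
    · exact ⟨[], w, rfl, commAll_nil u⟩
    · exact ⟨b :: x, y, rfl, commAll_cons.2 ⟨hb, hx⟩⟩

theorem lAbsLetter_iff : LAbsLetter u w ↔ ∃ t, Sub u t ∧ Reachable u t w := by
  constructor
  · rintro ⟨x, t, y, h, hs, hx⟩
    exact ⟨t, hs, x, y, h, hx⟩
  · rintro ⟨t, hs, x, y, h, hx⟩
    exact ⟨x, t, y, h, hs, hx⟩

theorem not_lAbsLetter_nil : ¬ LAbsLetter u [] := by
  rw [lAbsLetter_iff]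
  rintro ⟨t, -, h⟩
  exact not_reachable_nil h

theorem not_lAbsorbs_nil : ¬ LAbsorbs u [] := by
  rintro ⟨c, -, h⟩
  exact not_reachable_nil h

theorem reduced_nil : Reduced ([] : Word N) := by
  rintro ⟨x, y, z, a, b, h, -⟩
  simp at h

theorem reduced_cons_iff {s : Letter N} :
    Reduced (s :: w) ↔ Reduced w ∧ ¬ LAbsLetter s w ∧ ¬ LAbsorbs s w := by
  constructor
  · intro h
    refine ⟨?_, ?_, ?_⟩
    · rintro ⟨x, y, z, a, b, rfl, hab⟩
      exact h ⟨s :: x, y, z, a, b, rfl, hab⟩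
    · rintro ⟨x, t, y, rfl, hs, hx⟩
      exact h ⟨[], x, y, s, t, rfl, Or.inl ⟨hs, hx⟩⟩
    · rintro ⟨c, hc, y, z, rfl, hy⟩
      exact h ⟨[], y, z, s, c, rfl, Or.inr ⟨hc, hy⟩⟩
  · rintro ⟨hw, hl, hr⟩ ⟨_ | ⟨d, x⟩, y, z, a, b, h, hab⟩
    · obtain ⟨rfl, rfl⟩ := List.cons.inj h
      rcases hab with ⟨hs, hy⟩ | ⟨hs, hy⟩
      · exact hl ⟨y, b, z, rfl, hs, hy⟩
      · exact hr ⟨b, hs, y, z, rfl, hy⟩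
    · obtain ⟨rfl, rfl⟩ := List.cons.inj h
      exact hw ⟨x, y, z, a, b, rfl, hab⟩

end Absorption

section Insertion

open scoped Classical in
/-- `scrub s acc v` deletes from `v` every letter under `s` that commutes with all the letters
kept before it, the letters of `acc` counting as kept. -/
noncomputable def scrub (s : Letter N) : Word N → Word N → Word N
  | _, [] => []
  | acc, r :: v =>
    if Sub r s ∧ CommAll r acc then scrub s acc v else r :: scrub s (acc ++ [r]) v

open scoped Classical in
/-- The letter `s` moves right until it is absorbed, or until it is blocked by an overlapping
letter `b`; in the latter case it absorbs every letter behind `b` that can reach it. -/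
noncomputable def ins (s : Letter N) : Word N → Word N
  | [] => [s]
  | b :: v =>
    if Sub s b then b :: v
    else if Sub b s then ins s v
    else if Comm s b then b :: ins s v
    else s :: b :: scrub s [b] v

noncomputable def nf : Word N → Word N := List.foldr ins []

variable {s r b : Letter N} {acc : Word N}

@[simp] theorem scrub_nil (s : Letter N) (acc : Word N) : scrub s acc [] = [] := by rw [scrub]

theorem scrub_cons_of_pos (h : Sub r s ∧ CommAll r acc) (v : Word N) :
    scrub s acc (r :: v) = scrub s acc v := by rw [scrub, if_pos h]

theorem scrub_cons_of_neg (h : ¬ (Sub r s ∧ CommAll r acc)) (v : Word N) :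
    scrub s acc (r :: v) = r :: scrub s (acc ++ [r]) v := by rw [scrub, if_neg h]

theorem sub_or_sub_or_comm_or_overlap (s b : Letter N) :
    Sub s b ∨ (¬ Sub s b ∧ Sub b s) ∨ Comm s b ∨ Overlap s b := by
  unfold Overlap; tauto

@[simp] theorem ins_nil (s : Letter N) : ins s [] = [s] := by rw [ins]

theorem ins_cons_of_sub (h : Sub s b) (v : Word N) : ins s (b :: v) = b :: v := by
  rw [ins, if_pos h]

theorem ins_cons_of_not_sub_of_sub (h₁ : ¬ Sub s b) (h₂ : Sub b s) (v : Word N) :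
    ins s (b :: v) = ins s v := by
  rw [ins, if_neg h₁, if_pos h₂]

theorem ins_cons_of_comm (h : Comm s b) (v : Word N) : ins s (b :: v) = b :: ins s v := by
  rw [ins, if_neg (fun h' => h'.not_comm h), if_neg (fun h' => h'.not_comm' h), if_pos h]

theorem ins_cons_of_overlap (h : Overlap s b) (v : Word N) :
    ins s (b :: v) = s :: b :: scrub s [b] v := by
  rw [ins, if_neg h.1, if_neg h.2.1, if_neg h.2.2]

theorem nf_cons (s : Letter N) (w : Word N) : nf (s :: w) = ins s (nf w) := rfl

theorem nf_append (x w : Word N) : nf (x ++ w) = List.foldr ins (nf w) x := List.foldr_append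

end Insertion

section ScrubAlgebra

variable {s t r : Letter N}

theorem scrub_congr {acc acc' : Word N} (h : ∀ x, Sub x s → (CommAll x acc ↔ CommAll x acc'))
    (v : Word N) : scrub s acc v = scrub s acc' v := by
  induction v generalizing acc acc' with
  | nil => simp
  | cons r v ih =>
    by_cases hr : Sub r s ∧ CommAll r acc
    · rw [scrub_cons_of_pos hr, scrub_cons_of_pos ⟨hr.1, (h r hr.1).1 hr.2⟩, ih h]
    · rw [scrub_cons_of_neg hr, scrub_cons_of_neg (fun h' => hr ⟨h'.1, (h r h'.1).2 h'.2⟩),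
        ih (acc := acc ++ [r]) (acc' := acc' ++ [r])
          (fun x hx => by simp only [commAll_append, h x hx])]

theorem scrub_append_of_comm (h : ∀ x, Sub x s → Comm x r) (acc v : Word N) :
    scrub s (acc ++ [r]) v = scrub s acc v :=
  scrub_congr (fun x hx => by simp [h x hx]) v

theorem scrub_append_swap (acc : Word N) (a b : Letter N) (v : Word N) :
    scrub s (acc ++ [a] ++ [b]) v = scrub s (acc ++ [b] ++ [a]) v :=
  scrub_congr (fun _ _ => by simp only [commAll_append]; tauto) v

theorem scrub_eq_self {acc v : Word N}
    (h : ∀ c, Sub c s → CommAll c acc → ¬ Reachable c c v) : scrub s acc v = v := by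
  induction v generalizing acc with
  | nil => simp
  | cons r v ih =>
    have hr : ¬ (Sub r s ∧ CommAll r acc) := fun hr =>
      h r hr.1 hr.2 (reachable_cons_iff.2 (Or.inl rfl))
    refine (scrub_cons_of_neg hr v).trans (congrArg _ (ih fun c hc hacc hv => ?_))
    rw [commAll_append] at hacc
    exact h c hc hacc.1 (reachable_cons_iff.2 (Or.inr ⟨by simpa using hacc.2, hv⟩))

theorem not_reachable_scrub {c : Letter N} {acc : Word N} (hc : Sub c s) (hacc : CommAll c acc)
    (v : Word N) : ¬ Reachable c c (scrub s acc v) := by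
  induction v generalizing acc with
  | nil => simpa using not_reachable_nil
  | cons r v ih =>
    by_cases hr : Sub r s ∧ CommAll r acc
    · rw [scrub_cons_of_pos hr]
      exact ih hacc
    · rw [scrub_cons_of_neg hr, reachable_cons_iff]
      rintro (rfl | ⟨hcr, h⟩)
      · exact hr ⟨hc, hacc⟩
      · exact ih (commAll_append.2 ⟨hacc, by simpa using hcr⟩) h

theorem Reachable.of_scrub {u : Letter N} {acc w : Word N}
    (h : ∀ r, Sub r s → CommAll r acc → Comm u r) (hw : Reachable u t (scrub s acc w)) :
    Reachable u t w := by
  induction w generalizing acc with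
  | nil => exact absurd (by simpa using hw) not_reachable_nil
  | cons r w ih =>
    by_cases hr : Sub r s ∧ CommAll r acc
    · rw [scrub_cons_of_pos hr] at hw
      exact reachable_cons_iff.2 (Or.inr ⟨h r hr.1 hr.2, ih h hw⟩)
    · rw [scrub_cons_of_neg hr, reachable_cons_iff] at hw
      refine reachable_cons_iff.2 (hw.imp_right fun ⟨hur, hw⟩ => ⟨hur, ih ?_ hw⟩)
      exact fun r' hr' hacc => h r' hr' (commAll_append.1 hacc).1

theorem scrub_scrub_of_sub (hts : Sub t s) {accT acc : Word N}
    (h : ∀ x, Sub x t → CommAll x accT → CommAll x acc) (w : Word N) :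
    scrub s acc (scrub t accT w) = scrub s acc w := by
  induction w generalizing accT acc with
  | nil => simp
  | cons r w ih =>
    by_cases hrt : Sub r t ∧ CommAll r accT
    · rw [scrub_cons_of_pos hrt, scrub_cons_of_pos ⟨hrt.1.trans hts, h r hrt.1 hrt.2⟩]
      exact ih h
    rw [scrub_cons_of_neg hrt]
    by_cases hrs : Sub r s ∧ CommAll r acc
    · rw [scrub_cons_of_pos hrs, scrub_cons_of_pos hrs]
      exact ih fun x hx hxT => h x hx (commAll_append.1 hxT).1
    · rw [scrub_cons_of_neg hrs, scrub_cons_of_neg hrs]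
      refine congrArg _ (ih fun x hx hxT => ?_)
      rw [commAll_append] at hxT ⊢
      exact ⟨h x hx hxT.1, hxT.2⟩

theorem scrub_scrub_of_comm (hst : Comm s t) (A B w : Word N) :
    scrub s A (scrub t B w) = scrub t B (scrub s A w) := by
  induction w generalizing A B with
  | nil => simp
  | cons r w ih =>
    by_cases hrt : Sub r t ∧ CommAll r B
    · have hrs : ¬ (Sub r s ∧ CommAll r A) := fun h =>
        (Sub.refl r).not_comm (hst.of_sub h.1 hrt.1)
      rw [scrub_cons_of_pos hrt, scrub_cons_of_neg hrs, scrub_cons_of_pos hrt,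
        scrub_append_of_comm (fun x hx => hst.of_sub hx hrt.1) A, ih]
    by_cases hrs : Sub r s ∧ CommAll r A
    · rw [scrub_cons_of_neg hrt, scrub_cons_of_pos hrs, scrub_cons_of_pos hrs,
        scrub_append_of_comm (fun x hx => hst.symm.of_sub hx hrs.1) B, ih]
    rw [scrub_cons_of_neg hrt, scrub_cons_of_neg hrs, scrub_cons_of_neg hrs,
      scrub_cons_of_neg hrt, ih]

end ScrubAlgebra

section InsScrub

variable {s t : Letter N}

theorem scrub_ins_of_sub (hts : Sub t s) {acc : Word N} (hacc : CommAll t acc) (w : Word N) :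
    scrub s acc (ins t w) = scrub s acc w := by
  induction w generalizing acc with
  | nil => rw [ins_nil, scrub_cons_of_pos ⟨hts, hacc⟩]
  | cons b w ih =>
    rcases sub_or_sub_or_comm_or_overlap t b with htb | ⟨htb, hbt⟩ | htb | htb
    · rw [ins_cons_of_sub htb]
    · rw [ins_cons_of_not_sub_of_sub htb hbt,
        scrub_cons_of_pos ⟨hbt.trans hts, hacc.of_sub hbt⟩]
      exact ih hacc
    · rw [ins_cons_of_comm htb]
      by_cases hb : Sub b s ∧ CommAll b acc
      · rw [scrub_cons_of_pos hb, scrub_cons_of_pos hb]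
        exact ih hacc
      · rw [scrub_cons_of_neg hb, scrub_cons_of_neg hb]
        exact congrArg _ (ih (by simp [hacc, htb]))
    · rw [ins_cons_of_overlap htb, scrub_cons_of_pos ⟨hts, hacc⟩]
      by_cases hb : Sub b s ∧ CommAll b acc
      · rw [scrub_cons_of_pos hb, scrub_cons_of_pos hb]
        exact scrub_scrub_of_sub hts (fun x hx _ => hacc.of_sub hx) w
      · rw [scrub_cons_of_neg hb, scrub_cons_of_neg hb]
        refine congrArg _ (scrub_scrub_of_sub hts (fun x hx hxb => ?_) w)
        exact commAll_append.2 ⟨hacc.of_sub hx, hxb⟩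

theorem ins_scrub_of_sub (hts : Sub t s) (hst : ¬ Sub s t) (accT w : Word N) :
    ins s (scrub t accT w) = ins s w := by
  induction w generalizing accT with
  | nil => simp
  | cons b w ih =>
    by_cases hb : Sub b t ∧ CommAll b accT
    · rw [scrub_cons_of_pos hb,
        ins_cons_of_not_sub_of_sub (fun h => hst (h.trans hb.1)) (hb.1.trans hts)]
      exact ih accT
    rw [scrub_cons_of_neg hb]
    rcases sub_or_sub_or_comm_or_overlap s b with hsb | ⟨hsb, hbs⟩ | hsb | hsb
    · rw [ins_cons_of_sub hsb, ins_cons_of_sub hsb, scrub_eq_self fun c hc hacc _ => ?_]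
      exact (hc.trans (hts.trans hsb)).not_comm (by simpa using (commAll_append.1 hacc).2)
    · rw [ins_cons_of_not_sub_of_sub hsb hbs, ins_cons_of_not_sub_of_sub hsb hbs]
      exact ih _
    · rw [ins_cons_of_comm hsb, ins_cons_of_comm hsb]
      exact congrArg _ (ih _)
    · rw [ins_cons_of_overlap hsb, ins_cons_of_overlap hsb]
      exact congrArg _ (congrArg _
        (scrub_scrub_of_sub hts (fun _ _ hx => (commAll_append.1 hx).2) w))

theorem scrub_ins_of_comm (hst : Comm s t) (acc w : Word N) :
    scrub s acc (ins t w) = ins t (scrub s acc w) := by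
  have hts : ∀ {b : Letter N} {acc : Word N}, Sub b t → ¬ (Sub b s ∧ CommAll b acc) :=
    fun hbt hbs => (Sub.refl _).not_comm (hst.of_sub hbs.1 hbt)
  induction w generalizing acc with
  | nil => rw [ins_nil, scrub_cons_of_neg (hts (Sub.refl t))]; simp
  | cons b w ih =>
    rcases sub_or_sub_or_comm_or_overlap t b with htb | ⟨htb, hbt⟩ | htb | htb
    · have hb : ¬ (Sub b s ∧ CommAll b acc) := fun h => (htb.trans h.1).not_comm' hst
      rw [ins_cons_of_sub htb, scrub_cons_of_neg hb, ins_cons_of_sub htb]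
    · rw [ins_cons_of_not_sub_of_sub htb hbt, scrub_cons_of_neg (hts hbt),
        ins_cons_of_not_sub_of_sub htb hbt,
        scrub_append_of_comm (fun x hx => hst.of_sub hx hbt), ih acc]
    · rw [ins_cons_of_comm htb]
      by_cases hb : Sub b s ∧ CommAll b acc
      · rw [scrub_cons_of_pos hb, scrub_cons_of_pos hb]
        exact ih acc
      · rw [scrub_cons_of_neg hb, scrub_cons_of_neg hb, ins_cons_of_comm htb, ih]
    · have hb : ∀ acc', ¬ (Sub b s ∧ CommAll b acc') := fun _ h =>
        htb.2.2 (hst.of_sub_left h.1).symm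
      rw [ins_cons_of_overlap htb, scrub_cons_of_neg (hts (Sub.refl t)), scrub_cons_of_neg (hb _),
        scrub_cons_of_neg (hb _), ins_cons_of_overlap htb, scrub_append_swap,
        scrub_append_of_comm (fun x hx => hst.of_sub_left hx), scrub_scrub_of_comm hst]

end InsScrub

section InsIns

variable {s t b : Letter N}

theorem ins_ins_of_sub (hts : Sub t s) (v : Word N) : ins s (ins t v) = ins s v := by
  induction v with
  | nil =>
    by_cases hst : Sub s t
    · obtain rfl := hst.antisymm hts
      rw [ins_nil, ins_cons_of_sub (Sub.refl s)]
    · rw [ins_nil, ins_cons_of_not_sub_of_sub hst hts]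
  | cons b v ih =>
    rcases sub_or_sub_or_comm_or_overlap t b with htb | ⟨htb, hbt⟩ | htb | htb
    · rw [ins_cons_of_sub htb]
    · rw [ins_cons_of_not_sub_of_sub htb hbt, ih,
        ins_cons_of_not_sub_of_sub (fun h => htb (hts.trans h)) (hbt.trans hts)]
    · rw [ins_cons_of_comm htb]
      rcases sub_or_sub_or_comm_or_overlap s b with hsb | ⟨hsb, hbs⟩ | hsb | hsb
      · exact absurd htb (hts.trans hsb).not_comm
      · rw [ins_cons_of_not_sub_of_sub hsb hbs, ins_cons_of_not_sub_of_sub hsb hbs, ih]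
      · rw [ins_cons_of_comm hsb, ins_cons_of_comm hsb, ih]
      · rw [ins_cons_of_overlap hsb, ins_cons_of_overlap hsb, scrub_ins_of_sub hts (by simpa)]
    · rw [ins_cons_of_overlap htb]
      by_cases hst : Sub s t
      · obtain rfl := hst.antisymm hts
        rw [ins_cons_of_sub (Sub.refl s), ins_cons_of_overlap htb]
      · have hscrub : scrub t [] (b :: v) = b :: scrub t [b] v :=
          scrub_cons_of_neg (fun h => htb.2.1 h.1) v
        rw [ins_cons_of_not_sub_of_sub hst hts, ← hscrub, ins_scrub_of_sub hts hst]

theorem ins_ins_of_sub' (hts : Sub t s) (v : Word N) : ins t (ins s v) = ins s v := by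
  induction v with
  | nil => rw [ins_nil, ins_cons_of_sub hts]
  | cons b v ih =>
    rcases sub_or_sub_or_comm_or_overlap s b with hsb | ⟨hsb, hbs⟩ | hsb | hsb
    · rw [ins_cons_of_sub hsb, ins_cons_of_sub (hts.trans hsb)]
    · rw [ins_cons_of_not_sub_of_sub hsb hbs, ih]
    · rw [ins_cons_of_comm hsb, ins_cons_of_comm (hsb.of_sub_left hts), ih]
    · rw [ins_cons_of_overlap hsb, ins_cons_of_sub hts]

theorem ins_ins_cons_of_sub_of_comm (htb : Sub t b) (hst : Comm s t) (v : Word N) :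
    ins t (ins s (b :: v)) = ins s (b :: v) := by
  rcases sub_or_sub_or_comm_or_overlap s b with hsb | ⟨hsb, hbs⟩ | hsb | hsb
  · rw [ins_cons_of_sub hsb, ins_cons_of_sub htb]
  · exact absurd hst (htb.trans hbs).not_comm'
  · rw [ins_cons_of_comm hsb, ins_cons_of_sub htb]
  · rw [ins_cons_of_overlap hsb, ins_cons_of_comm hst.symm, ins_cons_of_sub htb]

theorem ins_ins_comm (hst : Comm s t) (v : Word N) :
    WEquiv (ins s (ins t v)) (ins t (ins s v)) := by
  induction v generalizing s t with
  | nil =>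
    rw [ins_nil, ins_nil, ins_cons_of_comm hst, ins_cons_of_comm hst.symm, ins_nil, ins_nil]
    exact .swap_head hst.symm []
  | cons b v ih =>
    by_cases htb : Sub t b
    · rw [ins_cons_of_sub htb, ins_ins_cons_of_sub_of_comm htb hst]
      exact .refl _
    by_cases hsb : Sub s b
    · rw [ins_cons_of_sub hsb, ins_ins_cons_of_sub_of_comm hsb hst.symm]
      exact .refl _
    by_cases hbt : Sub b t
    · rw [ins_cons_of_not_sub_of_sub htb hbt, ins_cons_of_comm (hst.of_sub_right hbt),
        ins_cons_of_not_sub_of_sub htb hbt]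
      exact ih hst
    by_cases hbs : Sub b s
    · rw [ins_cons_of_not_sub_of_sub hsb hbs, ins_cons_of_comm (hst.symm.of_sub_right hbs),
        ins_cons_of_not_sub_of_sub hsb hbs]
      exact ih hst
    by_cases hct : Comm t b <;> by_cases hcs : Comm s b
    · rw [ins_cons_of_comm hct, ins_cons_of_comm hcs, ins_cons_of_comm hcs, ins_cons_of_comm hct]
      exact (ih hst).cons b
    · rw [ins_cons_of_comm hct, ins_cons_of_overlap ⟨hsb, hbs, hcs⟩,
        ins_cons_of_overlap ⟨hsb, hbs, hcs⟩, ins_cons_of_comm hst.symm, ins_cons_of_comm hct,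
        scrub_ins_of_comm hst]
      exact .refl _
    · rw [ins_cons_of_comm hcs, ins_cons_of_overlap ⟨htb, hbt, hct⟩,
        ins_cons_of_overlap ⟨htb, hbt, hct⟩, ins_cons_of_comm hst, ins_cons_of_comm hcs,
        scrub_ins_of_comm hst.symm]
      exact .refl _
    · rw [ins_cons_of_overlap ⟨htb, hbt, hct⟩, ins_cons_of_overlap ⟨hsb, hbs, hcs⟩,
        ins_cons_of_comm hst, ins_cons_of_comm hst.symm, ins_cons_of_overlap ⟨hsb, hbs, hcs⟩,
        ins_cons_of_overlap ⟨htb, hbt, hct⟩, scrub_scrub_of_comm hst]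
      exact .swap_head hst.symm _

end InsIns

section Swap

variable {s a b : Letter N}

theorem scrub_swap_head (hab : Comm a b) (acc y : Word N) :
    WEquiv (scrub s acc (a :: b :: y)) (scrub s acc (b :: a :: y)) := by
  have hb' : Sub b s ∧ CommAll b (acc ++ [a]) ↔ Sub b s ∧ CommAll b acc := by
    simp [hab.symm]
  have ha' : Sub a s ∧ CommAll a (acc ++ [b]) ↔ Sub a s ∧ CommAll a acc := by
    simp [hab]
  by_cases ha : Sub a s ∧ CommAll a acc <;> by_cases hb : Sub b s ∧ CommAll b acc
  · rw [scrub_cons_of_pos ha, scrub_cons_of_pos hb, scrub_cons_of_pos hb, scrub_cons_of_pos ha]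
    exact .refl _
  · rw [scrub_cons_of_pos ha, scrub_cons_of_neg hb, scrub_cons_of_neg hb,
      scrub_cons_of_pos (ha'.2 ha)]
    exact .refl _
  · rw [scrub_cons_of_neg ha, scrub_cons_of_pos (hb'.2 hb), scrub_cons_of_pos hb,
      scrub_cons_of_neg ha]
    exact .refl _
  · rw [scrub_cons_of_neg ha, scrub_cons_of_neg (mt hb'.1 hb), scrub_cons_of_neg hb,
      scrub_cons_of_neg (mt ha'.1 ha), scrub_append_swap]
    exact .swap_head hab _

theorem scrub_swap (hab : Comm a b) (x acc y : Word N) :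
    WEquiv (scrub s acc (x ++ a :: b :: y)) (scrub s acc (x ++ b :: a :: y)) := by
  induction x generalizing acc with
  | nil => exact scrub_swap_head hab acc y
  | cons c x ih =>
    by_cases hc : Sub c s ∧ CommAll c acc
    · rw [List.cons_append, List.cons_append, scrub_cons_of_pos hc, scrub_cons_of_pos hc]
      exact ih acc
    · rw [List.cons_append, List.cons_append, scrub_cons_of_neg hc, scrub_cons_of_neg hc]
      exact (ih _).cons c

theorem ins_cons_cons_of_comm_of_sub (hab : Comm a b) (has : Sub a s) (hsa : ¬ Sub s a)
    (y : Word N) : ins s (b :: a :: y) = ins s (b :: y) := by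
  rcases sub_or_sub_or_comm_or_overlap s b with hsb | ⟨hsb, hbs⟩ | hsb | hsb
  · exact absurd hab (has.trans hsb).not_comm
  · rw [ins_cons_of_not_sub_of_sub hsb hbs, ins_cons_of_not_sub_of_sub hsb hbs,
      ins_cons_of_not_sub_of_sub hsa has]
  · rw [ins_cons_of_comm hsb, ins_cons_of_comm hsb, ins_cons_of_not_sub_of_sub hsa has]
  · rw [ins_cons_of_overlap hsb, ins_cons_of_overlap hsb,
      scrub_cons_of_pos ⟨has, by simpa using hab⟩]

theorem ins_swap_head_of_nested (hab : Comm a b) (h : Sub s a ∨ Sub a s) (y : Word N) :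
    WEquiv (ins s (a :: b :: y)) (ins s (b :: a :: y)) := by
  by_cases hsa : Sub s a
  · rw [ins_cons_of_sub hsa, ins_cons_of_comm (hab.of_sub_left hsa), ins_cons_of_sub hsa]
    exact .swap_head hab y
  · have has := h.resolve_left hsa
    rw [ins_cons_of_not_sub_of_sub hsa has, ins_cons_cons_of_comm_of_sub hab has hsa]
    exact .refl _

theorem ins_swap_head_of_comm_of_overlap (hab : Comm a b) (hsa : Comm s a) (hsb : Overlap s b)
    (y : Word N) : WEquiv (ins s (a :: b :: y)) (ins s (b :: a :: y)) := by
  rw [ins_cons_of_comm hsa, ins_cons_of_overlap hsb, ins_cons_of_overlap hsb,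
    scrub_cons_of_neg (fun h => h.1.not_comm' hsa),
    scrub_append_of_comm (fun x hx => hsa.of_sub_left hx)]
  exact (WEquiv.swap_head hsa.symm _).trans ((WEquiv.swap_head hab _).cons s)

theorem ins_swap_head (hab : Comm a b) (y : Word N) :
    WEquiv (ins s (a :: b :: y)) (ins s (b :: a :: y)) := by
  by_cases ha : Sub s a ∨ Sub a s
  · exact ins_swap_head_of_nested hab ha y
  by_cases hb : Sub s b ∨ Sub b s
  · exact (ins_swap_head_of_nested hab.symm hb y).symm
  simp only [not_or] at ha hb
  by_cases hsa : Comm s a <;> by_cases hsb : Comm s b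
  · rw [ins_cons_of_comm hsa, ins_cons_of_comm hsb, ins_cons_of_comm hsb, ins_cons_of_comm hsa]
    exact .swap_head hab _
  · exact ins_swap_head_of_comm_of_overlap hab hsa ⟨hb.1, hb.2, hsb⟩ y
  · exact (ins_swap_head_of_comm_of_overlap hab.symm hsb ⟨ha.1, ha.2, hsa⟩ y).symm
  · rw [ins_cons_of_overlap ⟨ha.1, ha.2, hsa⟩, ins_cons_of_overlap ⟨hb.1, hb.2, hsb⟩,
      scrub_cons_of_neg (fun h => hb.2 h.1), scrub_cons_of_neg (fun h => ha.2 h.1),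
      scrub_congr (acc := [b] ++ [a]) (acc' := [a] ++ [b]) (fun _ _ => by simp [and_comm])]
    exact (WEquiv.swap_head hab _).cons s

theorem ins_swap (hab : Comm a b) (x y : Word N) :
    WEquiv (ins s (x ++ a :: b :: y)) (ins s (x ++ b :: a :: y)) := by
  induction x with
  | nil => exact ins_swap_head hab y
  | cons c x ih =>
    simp only [List.cons_append]
    rcases sub_or_sub_or_comm_or_overlap s c with hsc | ⟨hsc, hcs⟩ | hsc | hsc
    · rw [ins_cons_of_sub hsc, ins_cons_of_sub hsc]
      exact (WEquiv.swap hab x y).cons c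
    · rw [ins_cons_of_not_sub_of_sub hsc hcs, ins_cons_of_not_sub_of_sub hsc hcs]
      exact ih
    · rw [ins_cons_of_comm hsc, ins_cons_of_comm hsc]
      exact ih.cons c
    · rw [ins_cons_of_overlap hsc, ins_cons_of_overlap hsc]
      exact ((scrub_swap hab x [c] y).cons c).cons s

theorem WEquiv.ins (s : Letter N) {w w' : Word N} (h : WEquiv w w') :
    WEquiv (ins s w) (ins s w') := by
  induction h with
  | refl => exact .refl _
  | tail _ hstep ih =>
    obtain ⟨x, y, a, b, hab, rfl, rfl⟩ := hstep
    exact ih.trans (ins_swap hab x y)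

end Swap

section Invariance

variable {u v : Word N}

theorem nf_eq_of_cancelStep (h : CancelStep u v) : nf u = nf v := by
  obtain ⟨x, y, s, t, hts, rfl | rfl, rfl⟩ := h <;> simp only [nf_append, nf_cons]
  · rw [ins_ins_of_sub hts]
  · rw [ins_ins_of_sub' hts]

theorem WEquiv.foldr_ins {p q : Word N} (h : WEquiv p q) (x : Word N) :
    WEquiv (x.foldr PS.ins p) (x.foldr PS.ins q) := by
  induction x with
  | nil => exact h
  | cons c x ih => exact ih.ins c

theorem nf_wequiv_of_swapStep (h : SwapStep u v) : WEquiv (nf u) (nf v) := by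
  obtain ⟨x, y, a, b, hab, rfl, rfl⟩ := h
  simp only [nf_append, nf_cons]
  exact (ins_ins_comm hab (nf y)).foldr_ins x

theorem GammaRel.nf_wequiv (h : GammaRel u v) : WEquiv (nf u) (nf v) := by
  induction h with
  | rel _ _ h =>
    rcases h with h | h
    · exact nf_wequiv_of_swapStep h
    · rw [nf_eq_of_cancelStep h]
      exact .refl _
  | refl => exact .refl _
  | symm _ _ _ ih => exact ih.symm
  | trans _ _ _ _ _ ih₁ ih₂ => exact ih₁.trans ih₂

end Invariance

section Representative

theorem gammaRel_scrub (s : Letter N) (acc v : Word N) :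
    GammaRel (s :: (acc ++ v)) (s :: (acc ++ scrub s acc v)) := by
  induction v generalizing acc with
  | nil => simpa using GammaRel.refl _
  | cons r v ih =>
    by_cases hr : Sub r s ∧ CommAll r acc
    · rw [scrub_cons_of_pos hr]
      have hmove : WEquiv (s :: (acc ++ r :: v)) (s :: r :: (acc ++ v)) :=
        (WEquiv.move_past hr.2 v).symm.cons s
      have hcancel : CancelStep (s :: r :: (acc ++ v)) (s :: (acc ++ v)) :=
        ⟨[], acc ++ v, s, r, hr.1, Or.inl rfl, rfl⟩
      exact ((GammaRel.of_wequiv hmove).trans (.of_cancelStep hcancel)).trans (ih acc)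
    · rw [scrub_cons_of_neg hr]
      simpa using ih (acc ++ [r])

theorem gammaRel_ins (s : Letter N) (v : Word N) : GammaRel (s :: v) (ins s v) := by
  induction v with
  | nil => exact .refl _
  | cons b v ih =>
    rcases sub_or_sub_or_comm_or_overlap s b with hsb | ⟨hsb, hbs⟩ | hsb | hsb
    · rw [ins_cons_of_sub hsb]
      exact .of_cancelStep ⟨[], v, b, s, hsb, Or.inr rfl, rfl⟩
    · rw [ins_cons_of_not_sub_of_sub hsb hbs]
      exact (GammaRel.of_cancelStep ⟨[], v, s, b, hbs, Or.inl rfl, rfl⟩).trans ih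
    · rw [ins_cons_of_comm hsb]
      exact (GammaRel.of_wequiv (.swap_head hsb v)).trans (ih.cons b)
    · rw [ins_cons_of_overlap hsb]
      exact gammaRel_scrub s [b] v

theorem gammaRel_nf (w : Word N) : GammaRel w (nf w) := by
  induction w with
  | nil => exact .refl _
  | cons s w ih => exact (ih.cons s).trans (gammaRel_ins s (nf w))

end Representative

section Reducedness

variable {s u t : Letter N} {w : Word N}

theorem Reachable.of_ins (hsu : Comm s u) (hut : ¬ Comm u t) (h : Reachable u t (ins s w)) :
    Reachable u t w := by
  induction w with
  | nil =>
    rcases reachable_cons_iff.1 (by simpa using h) with rfl | ⟨-, h⟩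
    · exact absurd hsu.symm hut
    · exact absurd h not_reachable_nil
  | cons b w ih =>
    rcases sub_or_sub_or_comm_or_overlap s b with hsb | ⟨hsb, hbs⟩ | hsb | hsb
    · rwa [ins_cons_of_sub hsb] at h
    · rw [ins_cons_of_not_sub_of_sub hsb hbs] at h
      exact reachable_cons_iff.2 (Or.inr ⟨(hsu.of_sub_left hbs).symm, ih h⟩)
    · rw [ins_cons_of_comm hsb, reachable_cons_iff] at h
      exact reachable_cons_iff.2 (h.imp_right fun h => ⟨h.1, ih h.2⟩)
    · rw [ins_cons_of_overlap hsb, reachable_cons_iff, reachable_cons_iff] at h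
      rcases h with rfl | ⟨-, h⟩
      · exact absurd hsu.symm hut
      refine reachable_cons_iff.2 (h.imp_right fun h => ⟨h.1, h.2.of_scrub ?_⟩)
      exact fun r hr _ => (hsu.of_sub_left hr).symm

theorem lAbsLetter_of_ins (hsu : Comm s u) (h : LAbsLetter u (ins s w)) : LAbsLetter u w := by
  obtain ⟨t, hut, h⟩ := lAbsLetter_iff.1 h
  exact lAbsLetter_iff.2 ⟨t, hut, h.of_ins hsu hut.not_comm⟩

theorem lAbsorbs_of_ins (hsu : Comm s u) (h : LAbsorbs u (ins s w)) : LAbsorbs u w := by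
  obtain ⟨c, hcu, h⟩ := h
  exact ⟨c, hcu, h.of_ins (hsu.of_sub_right hcu) (Sub.refl c).not_comm⟩

theorem lAbsLetter_of_scrub {acc : Word N} (hu : u ∈ acc) (h : LAbsLetter u (scrub s acc w)) :
    LAbsLetter u w := by
  obtain ⟨t, hut, h⟩ := lAbsLetter_iff.1 h
  exact lAbsLetter_iff.2 ⟨t, hut, h.of_scrub fun r _ hr => (hr u hu).symm⟩

theorem lAbsorbs_of_scrub {acc : Word N} (hu : u ∈ acc) (h : LAbsorbs u (scrub s acc w)) :
    LAbsorbs u w := by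
  obtain ⟨c, hcu, h⟩ := h
  exact ⟨c, hcu, h.of_scrub fun r _ hr => ((hr u hu).of_sub_right hcu).symm⟩

theorem Reduced.scrub (h : Reduced w) (s : Letter N) (acc : Word N) :
    Reduced (scrub s acc w) := by
  induction w generalizing acc with
  | nil => simpa using reduced_nil
  | cons r w ih =>
    obtain ⟨hw, hl, ha⟩ := reduced_cons_iff.1 h
    by_cases hr : Sub r s ∧ CommAll r acc
    · rw [scrub_cons_of_pos hr]
      exact ih hw acc
    · rw [scrub_cons_of_neg hr]
      exact reduced_cons_iff.2 ⟨ih hw _, mt (lAbsLetter_of_scrub (by simp)) hl,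
        mt (lAbsorbs_of_scrub (by simp)) ha⟩

theorem Reduced.ins (h : Reduced w) (s : Letter N) : Reduced (ins s w) := by
  induction w with
  | nil => simpa using reduced_cons_iff.2 ⟨reduced_nil, not_lAbsLetter_nil, not_lAbsorbs_nil⟩
  | cons b w ih =>
    obtain ⟨hw, hl, ha⟩ := reduced_cons_iff.1 h
    rcases sub_or_sub_or_comm_or_overlap s b with hsb | ⟨hsb, hbs⟩ | hsb | hsb
    · rwa [ins_cons_of_sub hsb]
    · rw [ins_cons_of_not_sub_of_sub hsb hbs]
      exact ih hw
    · rw [ins_cons_of_comm hsb]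
      exact reduced_cons_iff.2
        ⟨ih hw, mt (lAbsLetter_of_ins hsb) hl, mt (lAbsorbs_of_ins hsb) ha⟩
    · rw [ins_cons_of_overlap hsb]
      refine reduced_cons_iff.2 ⟨reduced_cons_iff.2 ⟨hw.scrub s [b],
        mt (lAbsLetter_of_scrub (by simp)) hl, mt (lAbsorbs_of_scrub (by simp)) ha⟩, ?_, ?_⟩
      · rw [lAbsLetter_iff]
        rintro ⟨t, hst, h⟩
        rcases reachable_cons_iff.1 h with rfl | ⟨hsb', -⟩
        · exact hsb.1 hst
        · exact hsb.2.2 hsb'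
      · rintro ⟨c, hcs, h⟩
        rcases reachable_cons_iff.1 h with rfl | ⟨hcb, h⟩
        · exact hsb.2.1 hcs
        · exact not_reachable_scrub hcs (by simpa using hcb) w h

theorem reduced_nf (w : Word N) : Reduced (nf w) := by
  induction w with
  | nil => exact reduced_nil
  | cons s w ih => exact ih.ins s

theorem ins_wequiv_cons (hl : ¬ LAbsLetter s w) (ha : ¬ LAbsorbs s w) :
    WEquiv (ins s w) (s :: w) := by
  induction w with
  | nil => exact .refl _
  | cons b w ih =>
    rcases sub_or_sub_or_comm_or_overlap s b with hsb | ⟨-, hbs⟩ | hsb | hsb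
    · exact absurd (lAbsLetter_iff.2 ⟨b, hsb, reachable_cons_iff.2 (Or.inl rfl)⟩) hl
    · exact absurd ⟨b, hbs, reachable_cons_iff.2 (Or.inl rfl)⟩ ha
    · have hl' : ¬ LAbsLetter s w := fun h => hl <| by
        obtain ⟨t, hst, h⟩ := lAbsLetter_iff.1 h
        exact lAbsLetter_iff.2 ⟨t, hst, reachable_cons_iff.2 (Or.inr ⟨hsb, h⟩)⟩
      have ha' : ¬ LAbsorbs s w := fun ⟨c, hcs, h⟩ =>
        ha ⟨c, hcs, reachable_cons_iff.2 (Or.inr ⟨hsb.of_sub_left hcs, h⟩)⟩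
      rw [ins_cons_of_comm hsb]
      exact ((ih hl' ha').cons b).trans (.swap_head hsb.symm w)
    · rw [ins_cons_of_overlap hsb, scrub_eq_self fun c hcs hcb h =>
        ha ⟨c, hcs, reachable_cons_iff.2 (Or.inr ⟨by simpa using hcb, h⟩)⟩]
      exact .refl _

theorem Reduced.nf_wequiv (h : Reduced w) : WEquiv (nf w) w := by
  induction w with
  | nil => exact .refl _
  | cons s w ih =>
    obtain ⟨hw, hl, ha⟩ := reduced_cons_iff.1 h
    exact ((ih hw).ins s).trans (ins_wequiv_cons hl ha)

end Reducedness

end PS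

open PS in
/-- Every element of the monoid Γ is represented by a reduced word, unique up to
commutation-equivalence. -/
theorem gamma_exists_unique_reduced_representative {N : ℕ} (u : Word N) :
    ∃ v : Word N, GammaRel u v ∧ Reduced v ∧
      ∀ v' : Word N, GammaRel u v' → Reduced v' → WEquiv v v' :=
  ⟨nf u, gammaRel_nf u, reduced_nf u, fun _ huv hv' => huv.nf_wequiv.trans hv'.nf_wequiv⟩
end

section
/- If two non-commuting letters r and s are both left-absorbed by a word v, then they are absorbed by the same letter of v (the witnessing indices coincide). -/
open PS in
private lemma comm_of_sub {N : ℕ} {r s t : Letter N} (h : Sub r t) (hc : Comm s t) :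
    Comm r s := by
  obtain ⟨h1, h2⟩ := h
  rcases hc with hc | hc
  · exact Or.inr (by omega)
  · exact Or.inl (by omega)

open PS in
private lemma labs_key {N : ℕ} {r s : Letter N} {x₁ x₂ y₁ y₂ : PS.Word N} {t₁ t₂ : Letter N}
    (he : x₁ ++ t₁ :: y₁ = x₂ ++ t₂ :: y₂) (hs₁ : Sub r t₁) (hc₂ : ∀ w ∈ x₂, Comm s w)
    (hlt : x₁.length < x₂.length) : Comm r s := by
  have h3 : (x₂ ++ t₂ :: y₂)[x₁.length]? = some t₁ := by
    rw [← he, List.getElem?_append_right le_rfl]; simp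
  rw [List.getElem?_append, if_pos hlt] at h3
  have ht : t₁ ∈ x₂ := by
    obtain ⟨hl, hg⟩ := List.getElem?_eq_some_iff.mp h3
    exact hg ▸ List.getElem_mem hl
  exact comm_of_sub hs₁ (hc₂ _ ht)

open PS in
/-- If two non-commuting letters are left-absorbed by `v`, they are absorbed by
the same letter of `v`. -/
theorem labs_noncomm_same_witness {N : ℕ} (r s : Letter N) (v : Word N)
    (hrs : ¬ Comm r s)
    (x₁ x₂ y₁ y₂ : Word N) (t₁ t₂ : Letter N)
    (h₁ : v = x₁ ++ t₁ :: y₁) (hs₁ : Sub r t₁) (hc₁ : ∀ w ∈ x₁, Comm r w)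
    (h₂ : v = x₂ ++ t₂ :: y₂) (hs₂ : Sub s t₂) (hc₂ : ∀ w ∈ x₂, Comm s w) :
    x₁.length = x₂.length := by
  rcases lt_trichotomy x₁.length x₂.length with h | h | h
  · exact absurd (labs_key (h₁.symm.trans h₂) hs₁ hc₂ h) hrs
  · exact h
  · exact absurd (labs_key (h₂.symm.trans h₁) hs₂ hc₁ h).symm hrs
end
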